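/- arXiv:1011.5942 — 4 statements merged into one kernel-verified Lean document; each statement's English description precedes it below -/
import Mathlib

section
/- Let Ω ⊆ ℝ² be a nonempty set such that every (a,b) ∈ Conv(Ω) satisfies b ≥ T_min > 0 and b ≤ T_max, and such that a is bounded below on Conv(Ω). Then inf_{(a,b) ∈ Conv(Ω)} a/b = inf_{(a,b) ∈ Ω} a/b. -/
/-!
For `θ = inf_Ω a/b`, every point of `Ω` lies in the half-plane `θ b ≤ a`. On `b > 0` the
superlevel sets of `a/b` are exactly these half-planes, so they are convex, and hence the
half-plane also contains `Conv(Ω)`: no mixture has a smaller ratio than the best pure point.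
-/

theorem QuasiconcaveOn.csInf_image_convexHull {𝕜 E β : Type*} [Semiring 𝕜] [PartialOrder 𝕜]
    [AddCommMonoid E] [Module 𝕜 E] [ConditionallyCompleteLattice β] {s t : Set E} {f : E → β}
    (hf : QuasiconcaveOn 𝕜 t f) (hst : convexHull 𝕜 s ⊆ t) (hs : s.Nonempty)
    (hbdd : BddBelow (f '' convexHull 𝕜 s)) :
    sInf (f '' convexHull 𝕜 s) = sInf (f '' s) := by
  have hsub : f '' s ⊆ f '' convexHull 𝕜 s := Set.image_mono (subset_convexHull 𝕜 s)
  refine le_antisymm (csInf_le_csInf hbdd (hs.image f) hsub) ?_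
  refine le_csInf ((hs.image f).mono hsub) ?_
  rintro _ ⟨x, hx, rfl⟩
  have hs_super : s ⊆ {y | y ∈ t ∧ sInf (f '' s) ≤ f y} := fun y hy =>
    ⟨hst (subset_convexHull 𝕜 s hy), csInf_le (hbdd.mono hsub) ⟨y, hy, rfl⟩⟩
  exact (convexHull_min hs_super (hf _) hx).2

theorem quasiconcaveOn_fst_div_snd {𝕜 : Type*} [Field 𝕜] [LinearOrder 𝕜]
    [IsStrictOrderedRing 𝕜] :
    QuasiconcaveOn 𝕜 {p : 𝕜 × 𝕜 | 0 < p.2} (fun p => p.1 / p.2) := by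
  intro r
  have hset : {p : 𝕜 × 𝕜 | p ∈ {p : 𝕜 × 𝕜 | 0 < p.2} ∧ r ≤ p.1 / p.2} =
      {p | 0 < p.2} ∩ {p | 0 ≤ (LinearMap.fst 𝕜 𝕜 𝕜 - r • LinearMap.snd 𝕜 𝕜 𝕜) p} := by
    ext p
    simp only [Set.mem_ofPred_eq, Set.mem_inter_iff, LinearMap.sub_apply, LinearMap.smul_apply,
      LinearMap.fst_apply, LinearMap.snd_apply, smul_eq_mul, sub_nonneg]
    exact and_congr_right fun hp => le_div_iff₀ hp
  rw [hset]
  exact (convex_halfSpace_gt (LinearMap.snd 𝕜 𝕜 𝕜).isLinear 0).inter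
    (convex_halfSpace_ge (LinearMap.isLinear _) 0)

theorem bddBelow_image_fst_div_snd {𝕜 : Type*} [Field 𝕜] [LinearOrder 𝕜]
    [IsStrictOrderedRing 𝕜] {s : Set (𝕜 × 𝕜)} {c : 𝕜} (hc : 0 < c)
    (hs : ∀ p ∈ s, c ≤ p.2) (hbdd : BddBelow (Prod.fst '' s)) :
    BddBelow ((fun p : 𝕜 × 𝕜 => p.1 / p.2) '' s) := by
  obtain ⟨m, hm⟩ := hbdd
  refine ⟨min m 0 / c, ?_⟩
  rintro _ ⟨p, hp, rfl⟩
  have hp2 : 0 < p.2 := hc.trans_le (hs p hp)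
  have hmp : min m 0 ≤ p.1 := (min_le_left m 0).trans (hm ⟨p, hp, rfl⟩)
  rw [div_le_div_iff₀ hc hp2]
  nlinarith [min_le_right m 0, hs p hp]

/-- The infimum ratio over the convexified (mixed) policy set equals the infimum ratio over
pure policies: if every point of `Conv(Ω)` has second coordinate in `[T_min, T_max]` with
`T_min > 0`, and first coordinate bounded below on `Conv(Ω)`, then
`inf_{Conv(Ω)} a/b = inf_{Ω} a/b`. -/
theorem stmt5 (Ω : Set (ℝ × ℝ)) (hne : Ω.Nonempty) (Tmin Tmax : ℝ) (hTmin : 0 < Tmin)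
    (hb : ∀ p ∈ convexHull ℝ Ω, Tmin ≤ p.2 ∧ p.2 ≤ Tmax)
    (hbdd : BddBelow ((fun p : ℝ × ℝ => p.1) '' (convexHull ℝ Ω))) :
    sInf ((fun p : ℝ × ℝ => p.1 / p.2) '' (convexHull ℝ Ω)) =
      sInf ((fun p : ℝ × ℝ => p.1 / p.2) '' Ω) :=
  quasiconcaveOn_fst_div_snd.csInf_image_convexHull
    (fun p hp => hTmin.trans_le (hb p hp).1) hne
    (bddBelow_image_fst_div_snd hTmin (fun p hp => (hb p hp).1) hbdd)
end

section
/- Suppose real sequences L[r] ≥ 0 and y_0[r] satisfy, for constants B ≥ 0, C ≥ 0, V > 0, θ_opt ∈ ℝ, and T[r] with 0 < T_min ≤ T[r] for all r: L[r+1] − L[r] + V·y_0[r] ≤ B + T[r]·(C + V·θ_opt) for every r ≥ 0. Then for every integer R > 0, writing ȳ_0[R] = (1/R)Σ_{r=0}^{R-1} y_0[r] and T̄[R] = (1/R)Σ_{r=0}^{R-1} T[r]: ȳ_0[R]/T̄[R] ≤ θ_opt + (B/T̄[R] + C)/V + L[0]/(V·R·T̄[R]). -/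
/-! Summing the drift-plus-penalty inequality over the first `R` frames telescopes the
Lyapunov differences to `L[R] - L[0] ≥ -L[0]`, which leaves
`V · Σ y₀ ≤ L[0] + R·B + (Σ T)·(C + V·θ_opt)`; dividing by `V · Σ T > 0` gives the claim,
since the factors `1/R` of the two averages cancel. -/

open Finset

theorem sum_range_sub_add_sum_le_of_forall {L g h : ℕ → ℝ}
    (hstep : ∀ r, L (r + 1) - L r + g r ≤ h r) (n : ℕ) :
    L n - L 0 + ∑ r ∈ range n, g r ≤ ∑ r ∈ range n, h r := by
  rw [← sum_range_sub L n, ← sum_add_distrib]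
  exact sum_le_sum fun r _ => hstep r

theorem mean_div_mean_le_of_mul_sum_le {Y S V L₀ B C θ R : ℝ} (hR : 0 < R) (hV : 0 < V)
    (hS : 0 < S) (h : V * Y ≤ L₀ + R * B + S * (C + V * θ)) :
    (1 / R * Y) / (1 / R * S) ≤ θ + (B / (1 / R * S) + C) / V + L₀ / (V * R * (1 / R * S)) := by
  have hVS : 0 < V * S := mul_pos hV hS
  calc (1 / R * Y) / (1 / R * S) = V * Y / (V * S) := by field_simp
    _ ≤ (L₀ + R * B + S * (C + V * θ)) / (V * S) := by gcongr
    _ = _ := by field_simp; ring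

theorem stmt11_general (Lf y0 T : ℕ → ℝ) (B C V θopt Tmin : ℝ)
    (hV : 0 < V) (hTmin : 0 < Tmin)
    (hL : ∀ r, 0 ≤ Lf r) (hT : ∀ r, Tmin ≤ T r)
    (hdrift : ∀ r, Lf (r + 1) - Lf r + V * y0 r ≤ B + T r * (C + V * θopt))
    (R : ℕ) (hR : 0 < R) :
    ((1 / R : ℝ) * ∑ r ∈ Finset.range R, y0 r) /
        ((1 / R : ℝ) * ∑ r ∈ Finset.range R, T r) ≤
      θopt + (B / ((1 / R : ℝ) * ∑ r ∈ Finset.range R, T r) + C) / V +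
        Lf 0 / (V * R * ((1 / R : ℝ) * ∑ r ∈ Finset.range R, T r)) := by
  have hRpos : (0 : ℝ) < R := Nat.cast_pos.mpr hR
  have hSpos : 0 < ∑ r ∈ range R, T r := by
    have hmin := card_nsmul_le_sum (range R) T Tmin fun r _ => hT r
    rw [card_range, nsmul_eq_mul] at hmin
    exact (mul_pos hRpos hTmin).trans_le hmin
  have hsum := sum_range_sub_add_sum_le_of_forall hdrift R
  rw [← mul_sum, sum_add_distrib, ← sum_mul, sum_const, card_range, nsmul_eq_mul] at hsum
  exact mean_div_mean_le_of_mul_sum_le hRpos hV hSpos (by linarith [hL R])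

/-- Deterministic telescoping argument behind Theorem 1(b): from the per-frame
drift-plus-penalty inequality, the achieved penalty ratio after `R` frames satisfies
`ȳ₀[R]/T̄[R] ≤ θ_opt + (B/T̄[R] + C)/V + L[0]/(V·R·T̄[R])`. -/
theorem stmt11 (Lf y0 T : ℕ → ℝ) (B C V θopt Tmin : ℝ)
    (hB : 0 ≤ B) (hC : 0 ≤ C) (hV : 0 < V) (hTmin : 0 < Tmin)
    (hL : ∀ r, 0 ≤ Lf r) (hT : ∀ r, Tmin ≤ T r)
    (hdrift : ∀ r, Lf (r + 1) - Lf r + V * y0 r ≤ B + T r * (C + V * θopt))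
    (R : ℕ) (hR : 0 < R) :
    ((1 / R : ℝ) * ∑ r ∈ Finset.range R, y0 r) /
        ((1 / R : ℝ) * ∑ r ∈ Finset.range R, T r) ≤
      θopt + (B / ((1 / R : ℝ) * ∑ r ∈ Finset.range R, T r) + C) / V +
        Lf 0 / (V * R * ((1 / R : ℝ) * ∑ r ∈ Finset.range R, T r)) :=
  stmt11_general Lf y0 T B C V θopt Tmin hV hTmin hL hT hdrift R hR
end

section
/- Combining the previous two facts: if Z_l[r+1] = max(Z_l[r] + y_l[r] − c_l·T[r], 0), T[r] ≥ T_min > 0, and (1/2)Σ_l (Z_l[r+1]² − Z_l[r]²) ≤ (F_1 + V·F_2)/2 for all r, then for all integers R > 0 and each l: (Σ_{r=0}^{R-1} y_l[r]) / (Σ_{r=0}^{R-1} T[r]) ≤ c_l + (1/T_min)·sqrt( (F_1 + V·F_2)/R + (Σ_{l'} Z_{l'}[0]²)/R² ). -/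
/-!
Unrolling the queue recursion `Z[r+1] ≥ Z[r] + y[r] - c T[r]` over `R` frames shows that the
constraint violation `∑ y - c ∑ T` is at most the final backlog `Z[R]`. Summing the drift bound
telescopes to `∑ₗ Z_l[R]² ≤ R (F₁ + V F₂) + ∑ₗ Z_l[0]²`, so the backlog grows at most like `√R`,
while `∑ T ≥ R T_min` grows linearly; dividing gives the `O(1/√R)` rate.
-/

open Finset

lemma sum_range_le_sub_of_add_le {Q a : ℕ → ℝ} (h : ∀ r, Q r + a r ≤ Q (r + 1)) (R : ℕ) :
    ∑ r ∈ range R, a r ≤ Q R - Q 0 := by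
  rw [← sum_range_sub]
  exact sum_le_sum fun r _ => by linarith [h r]

lemma le_add_mul_of_sub_le {f : ℕ → ℝ} {B : ℝ} (h : ∀ r, f (r + 1) - f r ≤ B) (R : ℕ) :
    f R ≤ f 0 + R * B := by
  induction R with
  | zero => simp
  | succ R ih => push_cast; linarith [h R]

lemma sum_sub_mul_sum_le_of_queue {Z y T : ℕ → ℝ} {c : ℝ} (hZ0 : 0 ≤ Z 0)
    (hrec : ∀ r, Z (r + 1) = max (Z r + y r - c * T r) 0) (R : ℕ) :
    ∑ r ∈ range R, y r - c * ∑ r ∈ range R, T r ≤ Z R := by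
  have hstep : ∀ r, Z r + (y r - c * T r) ≤ Z (r + 1) := fun r => by
    rw [hrec r, ← add_sub_assoc]
    exact le_max_left _ _
  have := sum_range_le_sub_of_add_le hstep R
  rw [sum_sub_distrib, ← mul_sum] at this
  linarith

lemma abs_le_mul_sqrt_of_sq_le {x K S : ℝ} {R : ℕ} (hR : 0 < R) (h : x ^ 2 ≤ R * K + S) :
    |x| ≤ R * √(K / R + S / R ^ 2) := by
  have hRpos : (0 : ℝ) < R := by exact_mod_cast hR
  have hfactor : (R : ℝ) * K + S = R ^ 2 * (K / R + S / R ^ 2) := by field_simp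
  rw [hfactor] at h
  calc |x| ≤ √(R ^ 2 * (K / R + S / R ^ 2)) := Real.abs_le_sqrt h
    _ = R * √(K / R + S / R ^ 2) := by rw [Real.sqrt_mul (by positivity), Real.sqrt_sq hRpos.le]

lemma div_le_add_div_of_sub_mul_le {a b c M d : ℝ} (hd : 0 < d) (hdb : d ≤ b) (hM : 0 ≤ M)
    (h : a - c * b ≤ M) : a / b ≤ c + M / d := by
  have hb : 0 < b := hd.trans_le hdb
  calc a / b = c + (a - c * b) / b := by field_simp; ring
    _ ≤ c + M / b := by gcongr
    _ ≤ c + M / d := by gcongr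

theorem stmt13_general (L : ℕ) (Z : Fin L → ℕ → ℝ) (y : Fin L → ℕ → ℝ) (c : Fin L → ℝ)
    (T : ℕ → ℝ) (F1 F2 V Tmin : ℝ)
    (hTmin : 0 < Tmin)
    (hZnn : ∀ l r, 0 ≤ Z l r)
    (hrec : ∀ l r, Z l (r + 1) = max (Z l r + y l r - c l * T r) 0)
    (hT : ∀ r, Tmin ≤ T r)
    (hdrift : ∀ r, (1 / 2) * ∑ l, (Z l (r + 1) ^ 2 - Z l r ^ 2) ≤ (F1 + V * F2) / 2)
    (R : ℕ) (hR : 0 < R) (l : Fin L) :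
    (∑ r ∈ Finset.range R, y l r) / (∑ r ∈ Finset.range R, T r) ≤
      c l + (1 / Tmin) *
        Real.sqrt ((F1 + V * F2) / R + (∑ l', Z l' 0 ^ 2) / R ^ 2) := by
  have hviolation := sum_sub_mul_sum_le_of_queue (hZnn l 0) (hrec l) R
  have henergy : ∑ l', Z l' R ^ 2 ≤ ∑ l', Z l' 0 ^ 2 + R * (F1 + V * F2) :=
    le_add_mul_of_sub_le (f := fun r => ∑ l', Z l' r ^ 2)
      (fun r => by rw [← sum_sub_distrib]; linarith [hdrift r]) R
  have hbacklog : Z l R ≤ R * √((F1 + V * F2) / R + (∑ l', Z l' 0 ^ 2) / R ^ 2) := by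
    refine (le_abs_self _).trans (abs_le_mul_sqrt_of_sq_le hR ?_)
    linarith [single_le_sum (f := fun l' => Z l' R ^ 2) (fun _ _ => sq_nonneg _) (mem_univ l)]
  have htime : R * Tmin ≤ ∑ r ∈ range R, T r := by
    simpa using card_nsmul_le_sum (range R) T Tmin fun r _ => hT r
  have hRpos : (0 : ℝ) < R := by exact_mod_cast hR
  convert div_le_add_div_of_sub_mul_le (by positivity) htime (by positivity)
    (hviolation.trans hbacklog) using 2
  field_simp

/-- Deterministic analogue of inequality (14): the constraint violation after `R` frames of
the drift-plus-penalty ratio algorithm is at most `O(sqrt((F₁ + V·F₂)/R))`. -/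
theorem stmt13 (L : ℕ) (Z : Fin L → ℕ → ℝ) (y : Fin L → ℕ → ℝ) (c : Fin L → ℝ)
    (T : ℕ → ℝ) (F1 F2 V Tmin : ℝ)
    (hF1 : 0 ≤ F1) (hF2 : 0 ≤ F2) (hV : 0 ≤ V) (hTmin : 0 < Tmin)
    (hZnn : ∀ l r, 0 ≤ Z l r)
    (hrec : ∀ l r, Z l (r + 1) = max (Z l r + y l r - c l * T r) 0)
    (hT : ∀ r, Tmin ≤ T r)
    (hdrift : ∀ r, (1 / 2) * ∑ l, (Z l (r + 1) ^ 2 - Z l r ^ 2) ≤ (F1 + V * F2) / 2)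
    (R : ℕ) (hR : 0 < R) (l : Fin L) :
    (∑ r ∈ Finset.range R, y l r) / (∑ r ∈ Finset.range R, T r) ≤
      c l + (1 / Tmin) *
        Real.sqrt ((F1 + V * F2) / R + (∑ l', Z l' 0 ^ 2) / R ^ 2) :=
  stmt13_general L Z y c T F1 F2 V Tmin hTmin hZnn hrec hT hdrift R hR l
end

section
/- Let y_0[r], T[r] be real sequences with T[r] ≥ T_min > 0 for all r. Suppose limsup_{R→∞} (1/R)Σ_{r=0}^{R-1} (y_0[r] − T[r]·θ_opt) ≤ B/V for constants B ≥ 0, V > 0, θ_opt ∈ ℝ, and suppose limsup_{R→∞} R / (Σ_{r=0}^{R-1} T[r]) ≤ 1/T_min. Then limsup_{R→∞} (Σ_{r=0}^{R-1} y_0[r]) / (Σ_{r=0}^{R-1} T[r]) ≤ θ_opt + B/(V·T_min). -/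
/-!
With `S_R = ∑_{r<R} T r ≥ R·T_min > 0`, the ratio splits as
`(∑ y₀)/S_R = θ_opt + a_R · b_R`, where `a_R = (1/R)∑ (y₀ r − T r·θ_opt)` and `b_R = R/S_R ≥ 0`.
Since `b_R ≥ 0`, `a_R·b_R ≤ max(a_R, 0)·b_R`, and the limsup of a product of nonnegative
sequences is at most the product of their limsups, `max(B/V, 0)·(1/T_min) = B/(V·T_min)`.
-/

open Filter

lemma EReal.limsup_coe_mul_le_of_nonneg {ι : Type*} {f : Filter ι} [f.NeBot] {u v : ι → ℝ}
    (hv : ∀ i, 0 ≤ v i) {a b : ℝ} (ha : 0 ≤ a)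
    (hu : limsup (fun i ↦ (u i : EReal)) f ≤ a) (hvb : limsup (fun i ↦ (v i : EReal)) f ≤ b) :
    limsup (fun i ↦ ((u i * v i : ℝ) : EReal)) f ≤ (a * b : ℝ) := by
  set u' : ι → EReal := fun i ↦ max (u i : EReal) 0
  have hv' : 0 ≤ᶠ[f] fun i ↦ (v i : EReal) := .of_forall fun i ↦ EReal.coe_nonneg.2 (hv i)
  have hu' : limsup u' f ≤ a := by
    rw [limsup_max, limsup_const]
    exact max_le hu (EReal.coe_nonneg.2 ha)
  calc limsup (fun i ↦ ((u i * v i : ℝ) : EReal)) f ≤ limsup (u' * fun i ↦ (v i : EReal)) f := by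
        refine limsup_le_limsup (.of_forall fun i ↦ ?_)
        simp only [Pi.mul_apply, u', EReal.coe_mul]
        exact mul_le_mul_of_nonneg_right (le_max_left _ _) (EReal.coe_nonneg.2 (hv i))
    _ ≤ limsup u' f * limsup (fun i ↦ (v i : EReal)) f :=
        EReal.limsup_mul_le (.of_forall fun _ ↦ le_max_right _ _) hv'
          (.inr (ne_top_of_le_ne_top (EReal.coe_ne_top b) hvb))
          (.inl (ne_top_of_le_ne_top (EReal.coe_ne_top a) hu'))
    _ ≤ (a * b : ℝ) := by
        rw [EReal.coe_mul]
        exact mul_le_mul hu' hvb (le_limsup_of_frequently_le hv'.frequently) (EReal.coe_nonneg.2 ha)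

lemma EReal.limsup_const_add_le {ι : Type*} {f : Filter ι} [f.NeBot] (c : ℝ) (w : ι → EReal) :
    limsup (fun i ↦ (c : EReal) + w i) f ≤ c + limsup w f := by
  have h := EReal.limsup_add_le (u := fun _ ↦ (c : EReal)) (v := w) (f := f) (by simp) (by simp)
  rwa [limsup_const] at h

lemma div_eq_add_avg_sub_mul {P S θ R : ℝ} (hS : S ≠ 0) (hR : R ≠ 0) :
    P / S = θ + (1 / R * (P - S * θ)) * (R / S) := by
  field_simp
  ring

/-- Pathwise version of Theorem 6(b): a limsup bound on the average of the centered penalty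
`y₀[r] − T[r]·θ_opt`, together with `limsup R/(∑ T[r]) ≤ 1/T_min`, gives
`limsup (∑ y₀[r])/(∑ T[r]) ≤ θ_opt + B/(V·T_min)`. -/
theorem stmt15 (y0 T : ℕ → ℝ) (Tmin B V θopt : ℝ)
    (hTmin : 0 < Tmin) (hT : ∀ r, Tmin ≤ T r) (hB : 0 ≤ B) (hV : 0 < V)
    (h1 : limsup (fun R : ℕ =>
        (((1 / R : ℝ) * ∑ r ∈ Finset.range R, (y0 r - T r * θopt) : ℝ) : EReal)) atTop ≤
      ((B / V : ℝ) : EReal))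
    (h2 : limsup (fun R : ℕ =>
        (((R : ℝ) / ∑ r ∈ Finset.range R, T r : ℝ) : EReal)) atTop ≤
      ((1 / Tmin : ℝ) : EReal)) :
    limsup (fun R : ℕ =>
        (((∑ r ∈ Finset.range R, y0 r) / (∑ r ∈ Finset.range R, T r) : ℝ) : EReal)) atTop ≤
      ((θopt + B / (V * Tmin) : ℝ) : EReal) := by
  have hS : ∀ R : ℕ, R * Tmin ≤ ∑ r ∈ Finset.range R, T r := fun R ↦ by
    simpa using Finset.card_nsmul_le_sum (Finset.range R) T Tmin fun r _ ↦ hT r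
  have hsplit : ∀ᶠ R : ℕ in atTop,
      (((∑ r ∈ Finset.range R, y0 r) / (∑ r ∈ Finset.range R, T r) : ℝ) : EReal) =
        θopt + (((1 / R : ℝ) * ∑ r ∈ Finset.range R, (y0 r - T r * θopt)) *
          ((R : ℝ) / ∑ r ∈ Finset.range R, T r) : ℝ) := by
    filter_upwards [eventually_ne_atTop 0] with R hR
    have hS_pos : 0 < ∑ r ∈ Finset.range R, T r := (mul_pos (by positivity) hTmin).trans_le (hS R)
    rw [Finset.sum_sub_distrib, ← Finset.sum_mul,
      div_eq_add_avg_sub_mul hS_pos.ne' (Nat.cast_ne_zero.2 hR), EReal.coe_add]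
  rw [limsup_congr hsplit]
  grw [EReal.limsup_const_add_le, EReal.limsup_coe_mul_le_of_nonneg
    (fun R ↦ div_nonneg R.cast_nonneg ((hS R).trans' (by positivity))) (by positivity) h1 h2]
  rw [← EReal.coe_add, div_mul_div_comm, mul_one]
end
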